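/- For L ∈ ℝ^{h×w} and the matrix-pair set 𝒫 = {(p,q) : |p_{i,j}| ≤ 1, |q_{i,j}| ≤ 1}, with gradient targets E₁ ∈ ℝ^{(h−1)×w}, E₂ ∈ ℝ^{h×(w−1)}, one has Σ_{i,j} |(L_{i+1,j} − L_{i,j}) − (E₁)_{i,j}| + Σ_{i,j} |(L_{i,j+1} − L_{i,j}) − (E₂)_{i,j}| = max over (p,q) ∈ 𝒫 of [Tr(𝓛(p,q)ᵀL) − Tr(pᵀE₁) − Tr(qᵀE₂)], where 𝓛(p,q)_{i,j} = p_{i−1,j} + q_{i,j−1} − p_{i,j} − q_{i,j} with zero boundary conventions. -/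
import Mathlib


noncomputable section

/-- Extension of `p ∈ ℝ^{(h-1)×w}` by zero outside its index range. -/
def pE (h w : ℕ) (p : Fin (h - 1) → Fin w → ℝ) (i j : ℕ) : ℝ :=
  if hij : i < h - 1 ∧ j < w then p ⟨i, hij.1⟩ ⟨j, hij.2⟩ else 0

/-- Extension of `q ∈ ℝ^{h×(w-1)}` by zero outside its index range. -/
def qE (h w : ℕ) (q : Fin h → Fin (w - 1) → ℝ) (i j : ℕ) : ℝ :=
  if hij : i < h ∧ j < w - 1 then q ⟨i, hij.1⟩ ⟨j, hij.2⟩ else 0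

/-- The operator `𝓛(p,q)_{i,j} = p_{i-1,j} + q_{i,j-1} - p_{i,j} - q_{i,j}`
with the zero boundary conventions. -/
def Lop (h w : ℕ) (p : Fin (h - 1) → Fin w → ℝ) (q : Fin h → Fin (w - 1) → ℝ) :
    Fin h → Fin w → ℝ := fun i j =>
  (if i.1 = 0 then 0 else pE h w p (i.1 - 1) j.1) +
    (if j.1 = 0 then 0 else qE h w q i.1 (j.1 - 1)) -
      pE h w p i.1 j.1 - qE h w q i.1 j.1

/-- First component of `𝓛ᵀ L`: vertical forward differences. -/
def LtP (h w : ℕ) (L : Fin h → Fin w → ℝ) : Fin (h - 1) → Fin w → ℝ :=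
  fun i j => L ⟨i.1 + 1, by omega⟩ j - L ⟨i.1, by omega⟩ j

/-- Second component of `𝓛ᵀ L`: horizontal forward differences. -/
def LtQ (h w : ℕ) (L : Fin h → Fin w → ℝ) : Fin h → Fin (w - 1) → ℝ :=
  fun i j => L i ⟨j.1 + 1, by omega⟩ - L i ⟨j.1, by omega⟩


lemma key1 (n : ℕ) (hn : 0 < n) (a F : ℕ → ℝ) (ha : a (n - 1) = 0) :
    ∑ i ∈ Finset.range n, ((if i = 0 then 0 else a (i - 1)) - a i) * F i
      = ∑ i ∈ Finset.range (n - 1), a i * (F (i + 1) - F i) := by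
  obtain ⟨m, rfl⟩ : ∃ m, n = m + 1 := ⟨n - 1, by omega⟩
  simp only [Nat.add_sub_cancel] at ha ⊢
  have h1 : ∑ i ∈ Finset.range (m + 1), (if i = 0 then 0 else a (i - 1)) * F i
      = ∑ i ∈ Finset.range m, a i * F (i + 1) := by
    rw [Finset.sum_range_succ' (fun i => (if i = 0 then 0 else a (i - 1)) * F i) m]
    simp
  calc ∑ i ∈ Finset.range (m + 1), ((if i = 0 then 0 else a (i - 1)) - a i) * F i
      = (∑ i ∈ Finset.range (m + 1), (if i = 0 then 0 else a (i - 1)) * F i)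
        - ∑ i ∈ Finset.range (m + 1), a i * F i := by
        rw [← Finset.sum_sub_distrib]; congr 1; ext i; ring
    _ = (∑ i ∈ Finset.range m, a i * F (i + 1)) - ∑ i ∈ Finset.range m, a i * F i := by
        rw [h1, Finset.sum_range_succ, ha]; ring
    _ = _ := by rw [← Finset.sum_sub_distrib]; congr 1; ext i; ring

lemma sum_lop (h w : ℕ) (hh : 0 < h) (hw : 0 < w)
    (L : Fin h → Fin w → ℝ)
    (p : Fin (h - 1) → Fin w → ℝ) (q : Fin h → Fin (w - 1) → ℝ) :
    ∑ i, ∑ j, Lop h w p q i j * L i j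
      = (∑ i, ∑ j, p i j * LtP h w L i j) + ∑ i, ∑ j, q i j * LtQ h w L i j := by
  set LE : ℕ → ℕ → ℝ :=
    fun i j => if hij : i < h ∧ j < w then L ⟨i, hij.1⟩ ⟨j, hij.2⟩ else 0 with hLE
  have hLEe : ∀ (i : Fin h) (j : Fin w), LE i.1 j.1 = L i j := by
    intro i j
    simp only [hLE, i.2, j.2, and_self, dif_pos]
  have hP : (∑ i : Fin h, ∑ j : Fin w,
      ((if i.1 = 0 then 0 else pE h w p (i.1 - 1) j.1) - pE h w p i.1 j.1) * L i j)
      = ∑ i, ∑ j, p i j * LtP h w L i j := by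
    rw [Finset.sum_comm, Finset.sum_comm (γ := Fin (h-1))]
    refine Finset.sum_congr rfl fun j _ => ?_
    have lhs : (∑ i : Fin h,
        ((if i.1 = 0 then 0 else pE h w p (i.1 - 1) j.1) - pE h w p i.1 j.1) * L i j)
        = ∑ i ∈ Finset.range h,
          ((if i = 0 then 0 else pE h w p (i - 1) j.1) - pE h w p i j.1) * LE i j.1 := by
      rw [← Fin.sum_univ_eq_sum_range]
      exact Finset.sum_congr rfl fun i _ => by rw [hLEe]
    rw [lhs, key1 h hh (fun i => pE h w p i j.1) (fun i => LE i j.1) (by simp [pE])]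
    rw [← Fin.sum_univ_eq_sum_range (fun i => pE h w p i j.1 * (LE (i+1) j.1 - LE i j.1)) (h-1)]
    refine Finset.sum_congr rfl fun i _ => ?_
    have h1 : pE h w p i.1 j.1 = p i j := by
      simp only [pE, i.2, j.2, and_self, dif_pos]
    have h2 : i.1 + 1 < h := by omega
    have h3 : i.1 < h := by omega
    have e1 : LE (i.1+1) j.1 = L ⟨i.1+1, h2⟩ j := by
      simp only [hLE, h2, j.2, and_self, dif_pos]
    have e2 : LE i.1 j.1 = L ⟨i.1, h3⟩ j := by
      simp only [hLE, h3, j.2, and_self, dif_pos]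
    rw [h1, e1, e2]; rfl
  have hQ : (∑ i : Fin h, ∑ j : Fin w,
      ((if j.1 = 0 then 0 else qE h w q i.1 (j.1 - 1)) - qE h w q i.1 j.1) * L i j)
      = ∑ i, ∑ j, q i j * LtQ h w L i j := by
    refine Finset.sum_congr rfl fun i _ => ?_
    have lhs : (∑ j : Fin w,
        ((if j.1 = 0 then 0 else qE h w q i.1 (j.1 - 1)) - qE h w q i.1 j.1) * L i j)
        = ∑ j ∈ Finset.range w,
          ((if j = 0 then 0 else qE h w q i.1 (j - 1)) - qE h w q i.1 j) * LE i.1 j := by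
      rw [← Fin.sum_univ_eq_sum_range]
      exact Finset.sum_congr rfl fun j _ => by rw [hLEe]
    rw [lhs, key1 w hw (fun j => qE h w q i.1 j) (fun j => LE i.1 j) (by simp [qE])]
    rw [← Fin.sum_univ_eq_sum_range (fun j => qE h w q i.1 j * (LE i.1 (j+1) - LE i.1 j)) (w-1)]
    refine Finset.sum_congr rfl fun j _ => ?_
    have h1 : qE h w q i.1 j.1 = q i j := by
      simp only [qE, i.2, j.2, and_self, dif_pos]
    have h2 : j.1 + 1 < w := by omega
    have h3 : j.1 < w := by omega
    have e1 : LE i.1 (j.1+1) = L i ⟨j.1+1, h2⟩ := by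
      simp only [hLE, i.2, h2, and_self, dif_pos]
    have e2 : LE i.1 j.1 = L i ⟨j.1, h3⟩ := by
      simp only [hLE, i.2, h3, and_self, dif_pos]
    rw [h1, e1, e2]; rfl
  calc ∑ i, ∑ j, Lop h w p q i j * L i j
      = (∑ i : Fin h, ∑ j : Fin w,
          ((if i.1 = 0 then 0 else pE h w p (i.1 - 1) j.1) - pE h w p i.1 j.1) * L i j)
        + ∑ i : Fin h, ∑ j : Fin w,
          ((if j.1 = 0 then 0 else qE h w q i.1 (j.1 - 1)) - qE h w q i.1 j.1) * L i j := by
        rw [← Finset.sum_add_distrib]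
        refine Finset.sum_congr rfl fun i _ => ?_
        rw [← Finset.sum_add_distrib]
        refine Finset.sum_congr rfl fun j _ => ?_
        unfold Lop; ring
    _ = _ := by rw [hP, hQ]


/-- The anisotropic TV term `∑|∇L - E|` equals the maximum over the box of
dual variables `(p,q) ∈ 𝒫` of `Tr(𝓛(p,q)ᵀL) - Tr(pᵀE₁) - Tr(qᵀE₂)`. -/
theorem tv_dual_max (h w : ℕ) (hh : 0 < h) (hw : 0 < w)
    (L : Fin h → Fin w → ℝ)
    (E1 : Fin (h - 1) → Fin w → ℝ) (E2 : Fin h → Fin (w - 1) → ℝ) :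
    IsGreatest
      {t : ℝ | ∃ (p : Fin (h - 1) → Fin w → ℝ) (q : Fin h → Fin (w - 1) → ℝ),
        (∀ i j, |p i j| ≤ 1) ∧ (∀ i j, |q i j| ≤ 1) ∧
        t = (∑ i, ∑ j, Lop h w p q i j * L i j) -
              (∑ i, ∑ j, p i j * E1 i j) - ∑ i, ∑ j, q i j * E2 i j}
      ((∑ i, ∑ j, |LtP h w L i j - E1 i j|) +
        ∑ i, ∑ j, |LtQ h w L i j - E2 i j|) := by
  have hform : ∀ (p : Fin (h - 1) → Fin w → ℝ) (q : Fin h → Fin (w - 1) → ℝ),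
      (∑ i, ∑ j, Lop h w p q i j * L i j) -
        (∑ i, ∑ j, p i j * E1 i j) - (∑ i, ∑ j, q i j * E2 i j)
      = (∑ i, ∑ j, p i j * (LtP h w L i j - E1 i j)) +
          ∑ i, ∑ j, q i j * (LtQ h w L i j - E2 i j) := by
    intro p q
    rw [sum_lop h w hh hw L p q]
    have eA : (∑ i, ∑ j, p i j * (LtP h w L i j - E1 i j))
        = (∑ i, ∑ j, p i j * LtP h w L i j) - ∑ i, ∑ j, p i j * E1 i j := by
      simp [mul_sub, Finset.sum_sub_distrib]
    have eB : (∑ i, ∑ j, q i j * (LtQ h w L i j - E2 i j))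
        = (∑ i, ∑ j, q i j * LtQ h w L i j) - ∑ i, ∑ j, q i j * E2 i j := by
      simp [mul_sub, Finset.sum_sub_distrib]
    rw [eA, eB]; ring
  constructor
  · refine ⟨fun i j => if 0 ≤ LtP h w L i j - E1 i j then 1 else -1,
      fun i j => if 0 ≤ LtQ h w L i j - E2 i j then 1 else -1, ?_, ?_, ?_⟩
    · intro i j; dsimp only; split <;> norm_num
    · intro i j; dsimp only; split <;> norm_num
    · rw [hform]
      congr 1 <;>
      · refine Finset.sum_congr rfl fun i _ => Finset.sum_congr rfl fun j _ => ?_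
        split_ifs with hc
        · rw [abs_of_nonneg hc, one_mul]
        · rw [abs_of_neg (by linarith), neg_one_mul]
  · rintro t ⟨p, q, hp, hq, rfl⟩
    rw [hform]
    refine add_le_add ?_ ?_ <;>
    · refine Finset.sum_le_sum fun i _ => Finset.sum_le_sum fun j _ => ?_
      refine le_trans (le_abs_self _) ?_
      rw [abs_mul]
      exact mul_le_of_le_one_left (abs_nonneg _) (by first | exact hp i j | exact hq i j)

end
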